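/- Let G be a graph with vertex labeling μ and let f be an injective function mapping pairs (label, multiset of colors) to colors. Define c̃^(0)(v) = μ(v) and c̃^(i)(v) = f(μ(v), {{ c̃^(i-1)(u) : u ∈ N(v) }}) for i ≥ 1, where the first argument is always the initial label μ(v) rather than the previous color. Then for every i ≥ 0 and all vertices u, v of G: c̃^(i)(u) = c̃^(i)(v) if and only if c^(i)(u) = c^(i)(v), where c^(i) is the Weisfeiler–Leman coloring; i.e., the modified recursion induces exactly the same partition of vertices as 1-WL at every iteration. -/
import Mathlib


open scoped Classical

universe u v

/-- A rooted labeled (unordered) tree: a root label together with a list of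
child subtrees.  The list order is irrelevant for the isomorphism relation. -/
inductive LTree (L : Type u) : Type u
  | node : L → List (LTree L) → LTree L

namespace LTree

variable {L : Type u} {L' C : Type v}

/-- The label of the root. -/
def label : LTree L → L
  | node a _ => a

/-- The child subtrees of the root. -/
def children : LTree L → List (LTree L)
  | node _ ts => ts

/-- Isomorphism of rooted labeled trees: there is a bijection between the node
sets preserving the root, the parent–child relation and node labels; for our
representation this means equal root labels and children that correspond, up to
a permutation, to pairwise isomorphic subtrees. -/
inductive Iso : LTree L → LTree L → Prop
  | node (a : L) {ts us vs : List (LTree L)} :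
      List.Forall₂ Iso ts vs → vs.Perm us → Iso (node a ts) (node a us)

/-- `Embeds t s` : `t` is an induced rooted subtree of `s`, i.e. the nodes of
`t` inject into the nodes of `s` preserving the root, labels and the
parent–child relation. -/
inductive Embeds : LTree L → LTree L → Prop
  | node (a : L) {ts us vs : List (LTree L)} :
      List.Forall₂ Embeds ts vs → vs.Subperm us → Embeds (node a ts) (node a us)

/-- Number of nodes of a rooted tree. -/
def size : LTree L → ℕ
  | node _ ts => 1 + (ts.attach.map (fun c => size c.1)).sum
decreasing_by simp_wf; have := List.sizeOf_lt_of_mem c.2; omega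

/-- Relabel a tree by `f`. -/
def map (f : L → L') : LTree L → LTree L'
  | node a ts => node (f a) (ts.attach.map (fun c => map f c.1))
decreasing_by simp_wf; have := List.sizeOf_lt_of_mem c.2; omega

/-- Number of nodes of the tree carrying label `x`. -/
def countLabel [DecidableEq L] (x : L) : LTree L → ℕ
  | node a ts => (if a = x then 1 else 0) + (ts.attach.map (fun c => countLabel x c.1)).sum
decreasing_by simp_wf; have := List.sizeOf_lt_of_mem c.2; omega

/-- Number of nodes at depth `d` carrying label `x`. -/
def countAt [DecidableEq L] (x : L) : ℕ → LTree L → ℕ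
  | 0, node a _ => if a = x then 1 else 0
  | d+1, node _ ts => (ts.attach.map (fun c => countAt x d c.1)).sum
termination_by _ t => sizeOf t
decreasing_by simp_wf; have := List.sizeOf_lt_of_mem c.2; omega

/-- `SubtreeAt t d s` : `s` is the subtree of `t` rooted at one of the nodes of
`t` at depth `d`. -/
inductive SubtreeAt : LTree L → ℕ → LTree L → Prop
  | refl (t : LTree L) : SubtreeAt t 0 t
  | step {t c s : LTree L} {d : ℕ} : c ∈ t.children → SubtreeAt c d s → SubtreeAt t (d+1) s

/-- The AHU canonical value: `ahu f t = f (label t) {{ ahu f c | c child of t }}`,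
computed bottom-up (a leaf gets `f (label) ∅`). -/
noncomputable def ahu (f : L → Multiset C → C) : LTree L → C
  | node a ts => f a (↑(ts.attach.map (fun c => ahu f c.1)) : Multiset C)
decreasing_by simp_wf; have := List.sizeOf_lt_of_mem c.2; omega

end LTree

/-- The 1-dimensional Weisfeiler–Leman coloring:
`c⁰ v = μ v` and `cⁱ⁺¹ v = h (cⁱ v) {{ cⁱ u | u ∈ N(v) }}`. -/
noncomputable def SimpleGraph.wlColoring {V : Type u} {C : Type v} (G : SimpleGraph V)
    [Fintype V] (μ : V → C) (h : C → Multiset C → C) : ℕ → V → C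
  | 0, u => μ u
  | i+1, u => h (G.wlColoring μ h i u) ((G.neighborFinset u).val.map (G.wlColoring μ h i))

/-- The modified coloring recursion: `c̃⁰ v = μ v` and
`c̃ⁱ v = f (μ v) {{ c̃ⁱ⁻¹ u | u ∈ N(v) }}`, where the first argument is always
the initial label `μ v` rather than the previous color. -/
noncomputable def SimpleGraph.wlColoringMod {V : Type u} {C : Type v} (G : SimpleGraph V)
    [Fintype V] (μ : V → C) (f : C → Multiset C → C) : ℕ → V → C
  | 0, u => μ u
  | i+1, u => f (μ u) ((G.neighborFinset u).val.map (G.wlColoringMod μ f i))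

lemma multiset_map_transfer {α β γ : Type*} {g : α → β} {g' : α → γ}
    (hg : ∀ x y, g x = g y → g' x = g' y) {s t : Multiset α}
    (hst : s.map g = t.map g) : s.map g' = t.map g' := by
  rw [← Multiset.rel_eq] at hst ⊢
  rw [Multiset.rel_map] at hst ⊢
  exact hst.mono (fun a _ b _ => hg a b)

section aux

variable {V : Type u} {C : Type v} [Fintype V] (G : SimpleGraph V) (μ : V → C)

lemma wl_refine (h : C → Multiset C → C)
    (hinj : ∀ a s b t, h a s = h b t → a = b ∧ s = t) (i : ℕ) (u v : V)
    (e : G.wlColoring μ h (i+1) u = G.wlColoring μ h (i+1) v) :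
    G.wlColoring μ h i u = G.wlColoring μ h i v :=
  (hinj _ _ _ _ e).1

lemma wl_mu (h : C → Multiset C → C)
    (hinj : ∀ a s b t, h a s = h b t → a = b ∧ s = t) (i : ℕ) (u v : V)
    (e : G.wlColoring μ h i u = G.wlColoring μ h i v) : μ u = μ v := by
  induction i with
  | zero => exact e
  | succ i ih => exact ih (wl_refine G μ h hinj i u v e)

lemma wlmod_refine (f : C → Multiset C → C)
    (finj : ∀ a s b t, f a s = f b t → a = b ∧ s = t) (i : ℕ) :
    ∀ u v : V, G.wlColoringMod μ f (i+1) u = G.wlColoringMod μ f (i+1) v →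
      G.wlColoringMod μ f i u = G.wlColoringMod μ f i v := by
  induction i with
  | zero => exact fun u v e => (finj _ _ _ _ e).1
  | succ i ih =>
    intro u v e
    simp only [SimpleGraph.wlColoringMod] at e ⊢
    obtain ⟨hμ, hm⟩ := finj _ _ _ _ e
    rw [hμ, multiset_map_transfer (fun x y hxy => ih x y hxy) hm]

end aux

/-- The modified recursion `c̃⁽ⁱ⁾(v) = f (μ v) {{c̃⁽ⁱ⁻¹⁾(u) : u ∈ N(v)}}`
(with injective `f`) induces exactly the same partition of vertices
as the 1-WL coloring `c⁽ⁱ⁾` (with injective `h`) at every iteration. -/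
theorem wlColoringMod_eq_iff_wlColoring_eq {V : Type u} {C : Type v} [Fintype V]
    (G : SimpleGraph V) (μ : V → C) (h f : C → Multiset C → C)
    (hinj : ∀ a s b t, h a s = h b t → a = b ∧ s = t)
    (finj : ∀ a s b t, f a s = f b t → a = b ∧ s = t)
    (i : ℕ) (u v : V) :
    G.wlColoringMod μ f i u = G.wlColoringMod μ f i v ↔
      G.wlColoring μ h i u = G.wlColoring μ h i v := by
  induction i generalizing u v with
  | zero => exact Iff.rfl
  | succ i ih =>
    constructor
    · intro e
      have hmod : G.wlColoringMod μ f i u = G.wlColoringMod μ f i v :=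
        wlmod_refine G μ f finj i u v e
      simp only [SimpleGraph.wlColoringMod] at e
      simp only [SimpleGraph.wlColoring]
      obtain ⟨hμ, hm⟩ := finj _ _ _ _ e
      rw [(ih u v).1 hmod,
        multiset_map_transfer (fun x y hxy => (ih x y).1 hxy) hm]
    · intro e
      simp only [SimpleGraph.wlColoring] at e
      simp only [SimpleGraph.wlColoringMod]
      obtain ⟨hc, hm⟩ := hinj _ _ _ _ e
      rw [wl_mu G μ h hinj i u v hc,
        multiset_map_transfer (fun x y hxy => (ih x y).2 hxy) hm]
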